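/- In the same setting (connected finite groupoid 𝒢, unital partial action θ = Ext(γ) on A = ⊕_{y∈𝒢₀} B_y): the trace map t_θ : A → A^θ is surjective if and only if the trace map t_{θ_{(x)}} : B_x → B_x^{θ_{(x)}} of the partial action of the isotropy group 𝒢(x) on B_x is surjective. -/
import Mathlib


open CategoryTheory

universe u v

def IsIdealIn {A : Type u} [NonUnitalRing A] (S T : Set A) : Prop :=
  S ⊆ T ∧ (0 : A) ∈ S ∧ (∀ a ∈ S, ∀ b ∈ S, a + b ∈ S) ∧ (∀ a ∈ S, -a ∈ S) ∧
    ∀ t ∈ T, ∀ s ∈ S, t * s ∈ S ∧ s * t ∈ S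

structure PartialAction (G : Type v) [Groupoid G] (A : Type u) [NonUnitalRing A] where
  D : ∀ {x y : G}, (x ⟶ y) → Set A
  act : ∀ {x y : G}, (x ⟶ y) → A → A
  ideal_base : ∀ y : G, IsIdealIn (D (𝟙 y)) Set.univ
  ideal_dom : ∀ {x y : G} (g : x ⟶ y), IsIdealIn (D g) (D (𝟙 y))
  act_mem : ∀ {x y : G} (g : x ⟶ y), ∀ a ∈ D (Groupoid.inv g), act g a ∈ D g
  act_add : ∀ {x y : G} (g : x ⟶ y), ∀ a ∈ D (Groupoid.inv g), ∀ b ∈ D (Groupoid.inv g),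
    act g (a + b) = act g a + act g b
  act_mul : ∀ {x y : G} (g : x ⟶ y), ∀ a ∈ D (Groupoid.inv g), ∀ b ∈ D (Groupoid.inv g),
    act g (a * b) = act g a * act g b
  act_inj : ∀ {x y : G} (g : x ⟶ y), ∀ a ∈ D (Groupoid.inv g), ∀ b ∈ D (Groupoid.inv g),
    act g a = act g b → a = b
  act_surj : ∀ {x y : G} (g : x ⟶ y), ∀ c ∈ D g, ∃ a ∈ D (Groupoid.inv g), act g a = c
  act_id : ∀ y : G, ∀ a ∈ D (𝟙 y), act (𝟙 y) a = a
  mem_comp : ∀ {w x y : G} (g : x ⟶ y) (h : w ⟶ x), ∀ a ∈ D (Groupoid.inv h),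
    act h a ∈ D (Groupoid.inv g) ∩ D h → a ∈ D (Groupoid.inv (h ≫ g))
  act_comp : ∀ {w x y : G} (g : x ⟶ y) (h : w ⟶ x), ∀ a ∈ D (Groupoid.inv h),
    act h a ∈ D (Groupoid.inv g) ∩ D h → act g (act h a) = act (h ≫ g) a

def IsId {G : Type v} [Groupoid G] {y z : G} (g : y ⟶ z) : Prop :=
  ∃ h : y = z, g = eqToHom h

section Aux
set_option linter.unusedSectionVars false

variable {G : Type v} [Groupoid G] {A : Type u} [NonUnitalRing A]
  [Fintype G] [∀ y z : G, Fintype (y ⟶ z)]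

lemma ginv_inv {y z : G} (g : y ⟶ z) : Groupoid.inv (Groupoid.inv g) = g := by
  simp [Groupoid.inv_eq_inv]

lemma ginv_id (y : G) : Groupoid.inv (𝟙 y) = 𝟙 y := by simp [Groupoid.inv_eq_inv]

lemma ginv_comp {u v w : G} (p : u ⟶ v) (q : v ⟶ w) :
    Groupoid.inv (p ≫ q) = Groupoid.inv q ≫ Groupoid.inv p := by
  simp [Groupoid.inv_eq_inv]

structure Ctx (G : Type v) [Groupoid G] (A : Type u) [NonUnitalRing A]
    [Fintype G] [∀ y z : G, Fintype (y ⟶ z)] where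
  θ : PartialAction G A
  e : ∀ {y z : G}, (y ⟶ z) → A
  x : G
  τ : ∀ y : G, x ⟶ y
  hτx : τ x = 𝟙 x
  he_idem : ∀ {y z : G} (g : y ⟶ z), e g * e g = e g
  he_cent : ∀ {y z : G} (g : y ⟶ z) (b : A), e g * b = b * e g
  hDe : ∀ {y z : G} (g : y ⟶ z), θ.D g = {a : A | ∃ b : A, a = b * e g}
  hgt1 : ∀ y : G, θ.D (Groupoid.inv (τ y)) = θ.D (𝟙 x)
  hgt2 : ∀ y : G, θ.D (τ y) = θ.D (𝟙 y)
  horth : ∀ y z : G, y ≠ z → ∀ a ∈ θ.D (𝟙 y), ∀ b ∈ θ.D (𝟙 z), a * b = 0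
  hspan : ∀ a : A, ∃ f : G → A, (∀ y : G, f y ∈ θ.D (𝟙 y)) ∧ a = ∑ y : G, f y

namespace Ctx

variable (C : Ctx G A)

lemma memD {y z : G} (g : y ⟶ z) {a : A} : a ∈ C.θ.D g ↔ a * C.e g = a := by
  rw [C.hDe]
  constructor
  · rintro ⟨b, rfl⟩
    rw [mul_assoc, C.he_idem]
  · intro h
    exact ⟨a, h.symm⟩

lemma mulE_mem {y z : G} (g : y ⟶ z) (a : A) : a * C.e g ∈ C.θ.D g :=
  (C.memD g).2 (by rw [mul_assoc, C.he_idem])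

lemma eMem {y z : G} (g : y ⟶ z) : C.e g ∈ C.θ.D g := (C.memD g).2 (C.he_idem g)

lemma zeroMem {y z : G} (g : y ⟶ z) : (0 : A) ∈ C.θ.D g := (C.memD g).2 (zero_mul _)

lemma addMem {y z : G} (g : y ⟶ z) {a b : A} (ha : a ∈ C.θ.D g) (hb : b ∈ C.θ.D g) :
    a + b ∈ C.θ.D g :=
  (C.memD g).2 (by rw [add_mul, (C.memD g).1 ha, (C.memD g).1 hb])

lemma sumMem {ι : Type*} (s : Finset ι) (f : ι → A) {y z : G} (g : y ⟶ z)
    (hf : ∀ i ∈ s, f i ∈ C.θ.D g) : (∑ i ∈ s, f i) ∈ C.θ.D g :=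
  Finset.sum_induction f (· ∈ C.θ.D g) (fun _ _ ha hb => C.addMem g ha hb) (C.zeroMem g) hf

lemma mulMemL {y z : G} (g : y ⟶ z) {a : A} (ha : a ∈ C.θ.D g) (b : A) : b * a ∈ C.θ.D g :=
  (C.memD g).2 (by rw [mul_assoc, (C.memD g).1 ha])

lemma D_sub {y z : G} (g : y ⟶ z) : C.θ.D g ⊆ C.θ.D (𝟙 z) := (C.θ.ideal_dom g).1

lemma e_mem_base {y z : G} (g : y ⟶ z) : C.e g ∈ C.θ.D (𝟙 z) := C.D_sub g (C.eMem g)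

lemma actZero {y z : G} (g : y ⟶ z) : C.θ.act g 0 = 0 := by
  have h0 := C.zeroMem (Groupoid.inv g)
  have h := C.θ.act_add g 0 h0 0 h0
  rw [add_zero] at h
  exact add_eq_left.mp h.symm

lemma e_congr {y z y' z' : G} {g : y ⟶ z} {g' : y' ⟶ z'} (h : C.θ.D g = C.θ.D g') :
    C.e g = C.e g' := by
  have h1 : C.e g * C.e g' = C.e g := (C.memD g').1 (by rw [← h]; exact C.eMem g)
  have h2 : C.e g' * C.e g = C.e g' := (C.memD g).1 (by rw [h]; exact C.eMem g')
  calc C.e g = C.e g * C.e g' := h1.symm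
    _ = C.e g' * C.e g := (C.he_cent g' (C.e g)).symm
    _ = C.e g' := h2

lemma eTauInv (y : G) : C.e (Groupoid.inv (C.τ y)) = C.e (𝟙 C.x) := C.e_congr (C.hgt1 y)

lemma eTau (y : G) : C.e (C.τ y) = C.e (𝟙 y) := C.e_congr (C.hgt2 y)

lemma actInvMem {y z : G} (g : y ⟶ z) {a : A} (ha : a ∈ C.θ.D g) :
    C.θ.act (Groupoid.inv g) a ∈ C.θ.D (Groupoid.inv g) :=
  C.θ.act_mem (Groupoid.inv g) a (by rw [ginv_inv]; exact ha)

lemma act_act_inv {y z : G} (g : y ⟶ z) {a : A} (ha : a ∈ C.θ.D g) :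
    C.θ.act g (C.θ.act (Groupoid.inv g) a) = a := by
  have h1 : C.θ.act (Groupoid.inv g) a ∈ C.θ.D (Groupoid.inv g) := C.actInvMem g ha
  have h2 := C.θ.act_comp g (Groupoid.inv g) a (by rw [ginv_inv]; exact ha) ⟨h1, h1⟩
  rw [Groupoid.inv_comp] at h2
  rw [h2, C.θ.act_id z a (C.D_sub g ha)]

lemma act_inv_act {y z : G} (g : y ⟶ z) {a : A} (ha : a ∈ C.θ.D (Groupoid.inv g)) :
    C.θ.act (Groupoid.inv g) (C.θ.act g a) = a := by
  have h := C.act_act_inv (Groupoid.inv g) (a := a) ha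
  rw [ginv_inv] at h
  exact h

def Gam {y z : G} (g : y ⟶ z) : A →+ A where
  toFun a := C.θ.act g (a * C.e (Groupoid.inv g))
  map_zero' := by
    show C.θ.act g (0 * C.e (Groupoid.inv g)) = 0
    rw [zero_mul]; exact C.actZero g
  map_add' a b := by
    show C.θ.act g ((a + b) * C.e (Groupoid.inv g)) =
      C.θ.act g (a * C.e (Groupoid.inv g)) + C.θ.act g (b * C.e (Groupoid.inv g))
    rw [add_mul]
    exact C.θ.act_add g _ (C.mulE_mem _ a) _ (C.mulE_mem _ b)

lemma gam_apply {y z : G} (g : y ⟶ z) (a : A) :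
    C.Gam g a = C.θ.act g (a * C.e (Groupoid.inv g)) := rfl

lemma gamMem {y z : G} (g : y ⟶ z) (a : A) : C.Gam g a ∈ C.θ.D g :=
  C.θ.act_mem g _ (C.mulE_mem _ a)

lemma gam_eq_act {y z : G} (g : y ⟶ z) {a : A} (ha : a ∈ C.θ.D (Groupoid.inv g)) :
    C.Gam g a = C.θ.act g a := by
  rw [C.gam_apply, (C.memD _).1 ha]

lemma memBx_inv_tau (y : G) {a : A} (ha : a ∈ C.θ.D (𝟙 C.x)) :
    a ∈ C.θ.D (Groupoid.inv (C.τ y)) := by rw [C.hgt1]; exact ha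

lemma gam_tau {y : G} {a : A} (ha : a ∈ C.θ.D (𝟙 C.x)) :
    C.Gam (C.τ y) a = C.θ.act (C.τ y) a := C.gam_eq_act _ (C.memBx_inv_tau y ha)

lemma gam_id {y : G} {a : A} (ha : a ∈ C.θ.D (𝟙 y)) : C.Gam (𝟙 y) a = a := by
  rw [C.gam_apply, ginv_id, (C.memD _).1 ha, C.θ.act_id y a ha]

lemma gam_tau_x {a : A} (ha : a ∈ C.θ.D (𝟙 C.x)) : C.Gam (C.τ C.x) a = a := by
  rw [C.hτx]
  exact C.gam_id ha

lemma gam_zero {y z w : G} (g : y ⟶ w) {a : A} (ha : a ∈ C.θ.D (𝟙 z)) (hne : z ≠ y) :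
    C.Gam g a = 0 := by
  rw [C.gam_apply, C.horth z y hne a ha _ (C.e_mem_base (Groupoid.inv g)), C.actZero]

lemma mul_e_absorb {u v : G} (p : u ⟶ v) (a : A) : a * C.e (𝟙 v) * C.e p = a * C.e p := by
  have hmem : C.e p * C.e (𝟙 v) = C.e p := (C.memD (𝟙 v)).1 (C.e_mem_base p)
  rw [mul_assoc, C.he_cent (𝟙 v) (C.e p), hmem]

lemma gam_proj {y z : G} (g : y ⟶ z) (a : A) : C.Gam g (a * C.e (𝟙 y)) = C.Gam g a := by
  rw [C.gam_apply, C.gam_apply, C.mul_e_absorb]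

lemma e_inv_mem_tau {y w : G} (g : y ⟶ w) : C.e (Groupoid.inv g) ∈ C.θ.D (C.τ y) := by
  rw [C.hgt2]; exact C.e_mem_base (Groupoid.inv g)

lemma tau_delta {y w : G} (g : y ⟶ w) :
    C.θ.act (C.τ y) (C.θ.act (Groupoid.inv (C.τ y)) (C.e (Groupoid.inv g)))
      = C.e (Groupoid.inv g) :=
  C.act_act_inv (C.τ y) (C.e_inv_mem_tau g)

lemma act_tau_tau_inv {y : G} {d : A} (hd : d ∈ C.θ.D (𝟙 y)) :
    C.θ.act (C.τ y) (C.θ.act (Groupoid.inv (C.τ y)) d) = d :=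
  C.act_act_inv (C.τ y) (by rw [C.hgt2]; exact hd)

lemma memA {u w : G} (k : u ⟶ w) {c' : A} (hc' : c' ∈ C.θ.D (Groupoid.inv k)) :
    c' ∈ C.θ.D (Groupoid.inv (k ≫ Groupoid.inv (C.τ w))) := by
  have h1 : C.θ.act k c' ∈ C.θ.D k := C.θ.act_mem k c' hc'
  refine C.θ.mem_comp (Groupoid.inv (C.τ w)) k c' hc' ⟨?_, h1⟩
  rw [ginv_inv, C.hgt2]
  exact C.D_sub k h1

lemma actB {u : G} (w : G) (p : u ⟶ C.x) {c' : A} (hc' : c' ∈ C.θ.D (Groupoid.inv p)) :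
    C.θ.act (C.τ w) (C.θ.act p c') = C.θ.act (p ≫ C.τ w) c' ∧
      c' ∈ C.θ.D (Groupoid.inv (p ≫ C.τ w)) := by
  have h1 : C.θ.act p c' ∈ C.θ.D p := C.θ.act_mem p c' hc'
  have h2 : C.θ.act p c' ∈ C.θ.D (Groupoid.inv (C.τ w)) := by
    rw [C.hgt1]; exact C.D_sub p h1
  exact ⟨C.θ.act_comp (C.τ w) p c' hc' ⟨h2, h1⟩, C.θ.mem_comp (C.τ w) p c' hc' ⟨h2, h1⟩⟩

lemma mulDelta {y w : G} (g : y ⟶ w) {c' : A}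
    (hc' : c' ∈ C.θ.D (Groupoid.inv ((C.τ y ≫ g) ≫ Groupoid.inv (C.τ w)))) :
    c' * C.θ.act (Groupoid.inv (C.τ y)) (C.e (Groupoid.inv g)) = c' := by
  set k := C.τ y ≫ g with hk
  set h := k ≫ Groupoid.inv (C.τ w) with hh
  have hcx : c' ∈ C.θ.D (𝟙 C.x) := C.D_sub (Groupoid.inv h) hc'
  have hmorA : h ≫ C.τ w = k := by
    rw [hh, Category.assoc, Groupoid.inv_comp, Category.comp_id]
  have hck : c' ∈ C.θ.D (Groupoid.inv k) := by
    have hB := (C.actB w h hc').2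
    rw [hmorA] at hB
    exact hB
  have hu : C.θ.act k c' ∈ C.θ.D k := C.θ.act_mem k c' hck
  have huc : C.θ.act (Groupoid.inv k) (C.θ.act k c') = c' := C.act_inv_act k hck
  have ha : C.θ.act k c' ∈ C.θ.D (Groupoid.inv (Groupoid.inv k)) := by
    rw [ginv_inv]; exact hu
  have hcond : C.θ.act (Groupoid.inv k) (C.θ.act k c') ∈
      C.θ.D (Groupoid.inv (C.τ y)) ∩ C.θ.D (Groupoid.inv k) := by
    rw [huc]; exact ⟨C.memBx_inv_tau y hcx, hck⟩
  have hmem := C.θ.mem_comp (C.τ y) (Groupoid.inv k) _ ha hcond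
  have hact := C.θ.act_comp (C.τ y) (Groupoid.inv k) _ ha hcond
  rw [huc] at hact
  have hmor2 : Groupoid.inv k ≫ C.τ y = Groupoid.inv g := by
    rw [hk, ginv_comp, Category.assoc, Groupoid.inv_comp, Category.comp_id]
  rw [hmor2] at hact hmem
  rw [ginv_inv] at hmem
  have hd : C.θ.act (C.τ y) c' ∈ C.θ.D (Groupoid.inv g) := by
    rw [hact]
    exact C.θ.act_mem (Groupoid.inv g) _ (by rw [ginv_inv]; exact hmem)
  have hc'' : C.θ.act (Groupoid.inv (C.τ y)) (C.θ.act (C.τ y) c') = c' :=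
    C.act_inv_act (C.τ y) (C.memBx_inv_tau y hcx)
  have hmul : C.θ.act (Groupoid.inv (C.τ y)) (C.θ.act (C.τ y) c' * C.e (Groupoid.inv g))
      = C.θ.act (Groupoid.inv (C.τ y)) (C.θ.act (C.τ y) c') *
        C.θ.act (Groupoid.inv (C.τ y)) (C.e (Groupoid.inv g)) := by
    apply C.θ.act_mul (Groupoid.inv (C.τ y))
    · rw [ginv_inv]
      exact C.θ.act_mem (C.τ y) c' (C.memBx_inv_tau y hcx)
    · rw [ginv_inv]
      exact C.e_inv_mem_tau g
  rw [(C.memD (Groupoid.inv g)).1 hd] at hmul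
  rw [hc''] at hmul
  exact hmul.symm

lemma delta_eq {y w : G} (g : y ⟶ w) :
    C.θ.act (Groupoid.inv (C.τ y)) (C.e (Groupoid.inv g)) =
      C.e (Groupoid.inv ((C.τ y ≫ g) ≫ Groupoid.inv (C.τ w))) := by
  set δ := C.θ.act (Groupoid.inv (C.τ y)) (C.e (Groupoid.inv g)) with hδ
  have hδτ : δ ∈ C.θ.D (Groupoid.inv (C.τ y)) := C.actInvMem (C.τ y) (C.e_inv_mem_tau g)
  have h7 : δ ∈ C.θ.D (Groupoid.inv (C.τ y ≫ g)) := by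
    refine C.θ.mem_comp g (C.τ y) δ hδτ ?_
    rw [hδ, C.tau_delta g]
    exact ⟨C.eMem _, C.e_inv_mem_tau g⟩
  have hA : δ ∈ C.θ.D (Groupoid.inv ((C.τ y ≫ g) ≫ Groupoid.inv (C.τ w))) :=
    C.memA (C.τ y ≫ g) h7
  have h1 : δ * C.e (Groupoid.inv ((C.τ y ≫ g) ≫ Groupoid.inv (C.τ w))) = δ :=
    (C.memD _).1 hA
  have h2 : C.e (Groupoid.inv ((C.τ y ≫ g) ≫ Groupoid.inv (C.τ w))) * δ
      = C.e (Groupoid.inv ((C.τ y ≫ g) ≫ Groupoid.inv (C.τ w))) :=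
    C.mulDelta g (C.eMem _)
  calc δ = δ * C.e (Groupoid.inv ((C.τ y ≫ g) ≫ Groupoid.inv (C.τ w))) := h1.symm
    _ = C.e (Groupoid.inv ((C.τ y ≫ g) ≫ Groupoid.inv (C.τ w))) * δ :=
        (C.he_cent _ δ).symm
    _ = C.e (Groupoid.inv ((C.τ y ≫ g) ≫ Groupoid.inv (C.τ w))) := h2

lemma key_main {y w : G} (g : y ⟶ w) {c : A} (hc : c ∈ C.θ.D (𝟙 C.x)) :
    C.Gam g (C.Gam (C.τ y) c) =
      C.Gam (C.τ w) (C.Gam ((C.τ y ≫ g) ≫ Groupoid.inv (C.τ w)) c) := by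
  have hcτ : c ∈ C.θ.D (Groupoid.inv (C.τ y)) := C.memBx_inv_tau y hc
  have hδτ : C.θ.act (Groupoid.inv (C.τ y)) (C.e (Groupoid.inv g)) ∈
      C.θ.D (Groupoid.inv (C.τ y)) := C.actInvMem (C.τ y) (C.e_inv_mem_tau g)
  set δ := C.θ.act (Groupoid.inv (C.τ y)) (C.e (Groupoid.inv g)) with hδ
  have hτδ : C.θ.act (C.τ y) δ = C.e (Groupoid.inv g) := C.tau_delta g
  have hmulstep : C.θ.act (C.τ y) (c * δ) = C.θ.act (C.τ y) c * C.e (Groupoid.inv g) := by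
    rw [C.θ.act_mul (C.τ y) c hcτ δ hδτ, hτδ]
  have hcδ_invτ : c * δ ∈ C.θ.D (Groupoid.inv (C.τ y)) := C.mulMemL _ hδτ c
  have hcond : C.θ.act (C.τ y) (c * δ) ∈ C.θ.D (Groupoid.inv g) ∩ C.θ.D (C.τ y) :=
    ⟨by rw [hmulstep]; exact C.mulE_mem _ _, C.θ.act_mem _ _ hcδ_invτ⟩
  have h8 : C.θ.act g (C.θ.act (C.τ y) (c * δ)) = C.θ.act (C.τ y ≫ g) (c * δ) :=
    C.θ.act_comp g (C.τ y) _ hcδ_invτ hcond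
  have h7 : c * δ ∈ C.θ.D (Groupoid.inv (C.τ y ≫ g)) :=
    C.θ.mem_comp g (C.τ y) _ hcδ_invτ hcond
  have hAm : c * δ ∈ C.θ.D (Groupoid.inv ((C.τ y ≫ g) ≫ Groupoid.inv (C.τ w))) :=
    C.memA (C.τ y ≫ g) h7
  have hB := C.actB w ((C.τ y ≫ g) ≫ Groupoid.inv (C.τ w)) hAm
  have hmorA : ((C.τ y ≫ g) ≫ Groupoid.inv (C.τ w)) ≫ C.τ w = C.τ y ≫ g := by
    rw [Category.assoc, Groupoid.inv_comp, Category.comp_id]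
  rw [C.gam_apply, C.gam_apply, C.gam_apply, C.gam_apply]
  have hce : c * C.e (Groupoid.inv (C.τ y)) = c := by
    rw [C.eTauInv, (C.memD _).1 hc]
  rw [hce]
  rw [← C.delta_eq g, ← hδ]
  have hDh : C.θ.act ((C.τ y ≫ g) ≫ Groupoid.inv (C.τ w)) (c * δ) ∈
      C.θ.D ((C.τ y ≫ g) ≫ Groupoid.inv (C.τ w)) := C.θ.act_mem _ _ hAm
  have hDhx : C.θ.act ((C.τ y ≫ g) ≫ Groupoid.inv (C.τ w)) (c * δ) ∈ C.θ.D (𝟙 C.x) :=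
    C.D_sub _ hDh
  have he2 : C.θ.act ((C.τ y ≫ g) ≫ Groupoid.inv (C.τ w)) (c * δ) * C.e (Groupoid.inv (C.τ w))
      = C.θ.act ((C.τ y ≫ g) ≫ Groupoid.inv (C.τ w)) (c * δ) := by
    rw [C.eTauInv, (C.memD _).1 hDhx]
  rw [he2, ← hmulstep, h8, hB.1, hmorA]

lemma actTau_e {y w : G} (g : y ⟶ w) :
    C.θ.act (C.τ w) (C.e ((C.τ y ≫ g) ≫ Groupoid.inv (C.τ w))) = C.e g := by
  have h1 := C.delta_eq (Groupoid.inv g)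
  rw [ginv_inv] at h1
  have hmor : Groupoid.inv ((C.τ w ≫ Groupoid.inv g) ≫ Groupoid.inv (C.τ y)) =
      (C.τ y ≫ g) ≫ Groupoid.inv (C.τ w) := by
    simp [ginv_comp, ginv_inv, Category.assoc]
  rw [hmor] at h1
  rw [← h1]
  exact C.act_tau_tau_inv (C.e_mem_base g)

def homEquiv (y w : G) : (y ⟶ w) ≃ (C.x ⟶ C.x) where
  toFun g := (C.τ y ≫ g) ≫ Groupoid.inv (C.τ w)
  invFun h := Groupoid.inv (C.τ y) ≫ (h ≫ C.τ w)
  left_inv g := by simp [Category.assoc]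
  right_inv h := by simp [Category.assoc]

lemma sum_comp_single (F : G → A) (hF : ∀ z, F z ∈ C.θ.D (𝟙 z)) (w : G) :
    (∑ z : G, F z) * C.e (𝟙 w) = F w := by
  rw [Finset.sum_mul,
    Finset.sum_eq_single w (fun z _ hne => C.horth z w hne _ (hF z) _ (C.eMem _))
      (fun h => absurd (Finset.mem_univ w) h)]
  exact (C.memD _).1 (hF w)

lemma sumComp (a : A) : (∑ z : G, a * C.e (𝟙 z)) = a := by
  obtain ⟨f, hf, rfl⟩ := C.hspan a
  exact Finset.sum_congr rfl (fun z _ => C.sum_comp_single f hf z)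

lemma comp_x {u : A} (hu : u ∈ C.θ.D (𝟙 C.x)) :
    (∑ w : G, C.Gam (C.τ w) u) * C.e (𝟙 C.x) = u := by
  have hm : ∀ w : G, C.Gam (C.τ w) u ∈ C.θ.D (𝟙 w) := fun w => by
    rw [← C.hgt2]; exact C.gamMem _ _
  rw [C.sum_comp_single (fun w => C.Gam (C.τ w) u) hm C.x, C.gam_tau_x hu]

lemma trace_eq (cA : A) :
    (∑ y : G, ∑ w : G, ∑ g : y ⟶ w, C.Gam g cA) =
      ∑ w : G, C.Gam (C.τ w)
        (∑ h : C.x ⟶ C.x, C.Gam h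
          (∑ z : G, C.θ.act (Groupoid.inv (C.τ z)) (cA * C.e (𝟙 z)))) := by
  have hcz : ∀ z : G, C.θ.act (Groupoid.inv (C.τ z)) (cA * C.e (𝟙 z)) ∈ C.θ.D (𝟙 C.x) :=
    fun z => by
      rw [← C.hgt1 z]
      exact C.actInvMem (C.τ z) (by rw [C.hgt2]; exact C.mulE_mem _ _)
  have inner : ∀ y w : G, (∑ g : y ⟶ w, C.Gam g cA) =
      C.Gam (C.τ w) (∑ h : C.x ⟶ C.x,
        C.Gam h (C.θ.act (Groupoid.inv (C.τ y)) (cA * C.e (𝟙 y)))) := by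
    intro y w
    have h1 : C.Gam (C.τ y) (C.θ.act (Groupoid.inv (C.τ y)) (cA * C.e (𝟙 y)))
        = cA * C.e (𝟙 y) := by
      rw [C.gam_tau (hcz y)]
      exact C.act_tau_tau_inv (C.mulE_mem (𝟙 y) cA)
    have h2 : ∀ g : y ⟶ w, C.Gam g cA =
        C.Gam (C.τ w) (C.Gam ((C.τ y ≫ g) ≫ Groupoid.inv (C.τ w))
          (C.θ.act (Groupoid.inv (C.τ y)) (cA * C.e (𝟙 y)))) := by
      intro g
      rw [← C.key_main g (hcz y), h1, C.gam_proj]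
    calc (∑ g : y ⟶ w, C.Gam g cA)
        = ∑ g : y ⟶ w, (fun h : C.x ⟶ C.x => C.Gam (C.τ w)
            (C.Gam h (C.θ.act (Groupoid.inv (C.τ y)) (cA * C.e (𝟙 y)))))
              ((C.homEquiv y w) g) :=
          Finset.sum_congr rfl (fun g _ => h2 g)
      _ = ∑ h : C.x ⟶ C.x, C.Gam (C.τ w)
            (C.Gam h (C.θ.act (Groupoid.inv (C.τ y)) (cA * C.e (𝟙 y)))) :=
          Equiv.sum_comp (C.homEquiv y w)
            (fun h => C.Gam (C.τ w)
              (C.Gam h (C.θ.act (Groupoid.inv (C.τ y)) (cA * C.e (𝟙 y)))))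
      _ = C.Gam (C.τ w) (∑ h : C.x ⟶ C.x,
            C.Gam h (C.θ.act (Groupoid.inv (C.τ y)) (cA * C.e (𝟙 y)))) :=
          (map_sum _ _ _).symm
  calc (∑ y : G, ∑ w : G, ∑ g : y ⟶ w, C.Gam g cA)
      = ∑ y : G, ∑ w : G, C.Gam (C.τ w) (∑ h : C.x ⟶ C.x,
          C.Gam h (C.θ.act (Groupoid.inv (C.τ y)) (cA * C.e (𝟙 y)))) :=
        Finset.sum_congr rfl (fun y _ => Finset.sum_congr rfl (fun w _ => inner y w))
    _ = ∑ w : G, ∑ y : G, C.Gam (C.τ w) (∑ h : C.x ⟶ C.x,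
          C.Gam h (C.θ.act (Groupoid.inv (C.τ y)) (cA * C.e (𝟙 y)))) :=
        Finset.sum_comm
    _ = ∑ w : G, C.Gam (C.τ w) (∑ y : G, ∑ h : C.x ⟶ C.x,
          C.Gam h (C.θ.act (Groupoid.inv (C.τ y)) (cA * C.e (𝟙 y)))) :=
        Finset.sum_congr rfl (fun w _ => (map_sum _ _ _).symm)
    _ = ∑ w : G, C.Gam (C.τ w) (∑ h : C.x ⟶ C.x, ∑ y : G,
          C.Gam h (C.θ.act (Groupoid.inv (C.τ y)) (cA * C.e (𝟙 y)))) := by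
        refine Finset.sum_congr rfl (fun w _ => ?_)
        rw [Finset.sum_comm]
    _ = ∑ w : G, C.Gam (C.τ w) (∑ h : C.x ⟶ C.x,
          C.Gam h (∑ z : G, C.θ.act (Groupoid.inv (C.τ z)) (cA * C.e (𝟙 z)))) := by
        refine Finset.sum_congr rfl (fun w _ => ?_)
        congr 1
        exact Finset.sum_congr rfl (fun h _ => (map_sum _ _ _).symm)

lemma main :
    (∀ a : A, (∀ {y z : G} (g : y ⟶ z),
        C.θ.act g (a * C.e (Groupoid.inv g)) = a * C.e g) →
      ∃ c : A, (∑ y : G, ∑ w : G, ∑ g : y ⟶ w,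
          C.θ.act g (c * C.e (Groupoid.inv g))) = a)
    ↔
    (∀ b ∈ C.θ.D (𝟙 C.x), (∀ h : C.x ⟶ C.x,
        C.θ.act h (b * C.e (Groupoid.inv h)) = b * C.e h) →
      ∃ c ∈ C.θ.D (𝟙 C.x), (∑ h : C.x ⟶ C.x,
          C.θ.act h (c * C.e (Groupoid.inv h))) = b) := by
  constructor
  · intro H b hb hbinv
    have hbinv' : ∀ h : C.x ⟶ C.x, C.Gam h b = b * C.e h := fun h => hbinv h
    have hGb : ∀ z : G, C.Gam (C.τ z) b ∈ C.θ.D (𝟙 z) := fun z => by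
      rw [← C.hgt2]; exact C.gamMem _ _
    set a := ∑ w : G, C.Gam (C.τ w) b with ha
    have hainv : ∀ {y w : G} (g : y ⟶ w),
        C.θ.act g (a * C.e (Groupoid.inv g)) = a * C.e g := by
      intro y w g
      have step1 : C.Gam g a = C.Gam g (C.Gam (C.τ y) b) := by
        rw [ha, map_sum]
        exact Finset.sum_eq_single y (fun z _ hne => C.gam_zero g (hGb z) hne)
          (fun h => absurd (Finset.mem_univ y) h)
      have step2 : C.Gam g (C.Gam (C.τ y) b) =
          C.Gam (C.τ w) (C.Gam ((C.τ y ≫ g) ≫ Groupoid.inv (C.τ w)) b) :=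
        C.key_main g hb
      have heh_x : C.e ((C.τ y ≫ g) ≫ Groupoid.inv (C.τ w)) ∈ C.θ.D (𝟙 C.x) :=
        C.e_mem_base _
      have step3 : C.Gam (C.τ w) (C.Gam ((C.τ y ≫ g) ≫ Groupoid.inv (C.τ w)) b) =
          C.Gam (C.τ w) b * C.e g := by
        rw [hbinv' ((C.τ y ≫ g) ≫ Groupoid.inv (C.τ w))]
        rw [C.gam_tau (C.mulMemL _ heh_x b)]
        rw [C.θ.act_mul (C.τ w) b (C.memBx_inv_tau w hb) _ (C.memBx_inv_tau w heh_x)]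
        rw [C.actTau_e g, C.gam_tau hb]
      have step4 : a * C.e g = C.Gam (C.τ w) b * C.e g := by
        rw [ha, Finset.sum_mul]
        exact Finset.sum_eq_single w
          (fun z _ hne => C.horth z w hne _ (hGb z) _ (C.D_sub g (C.eMem g)))
          (fun h => absurd (Finset.mem_univ w) h)
      show C.Gam g a = a * C.e g
      rw [step1, step2, step3, step4]
    obtain ⟨cA, hcA⟩ := H a (fun {y w} g => hainv g)
    have hcA' : (∑ y : G, ∑ w : G, ∑ g : y ⟶ w, C.Gam g cA) = a := hcA
    have hcx : (∑ z : G, C.θ.act (Groupoid.inv (C.τ z)) (cA * C.e (𝟙 z))) ∈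
        C.θ.D (𝟙 C.x) :=
      C.sumMem _ _ _ (fun z _ => by
        rw [← C.hgt1 z]
        exact C.actInvMem (C.τ z) (by rw [C.hgt2]; exact C.mulE_mem _ _))
    have htr := C.trace_eq cA
    rw [hcA'] at htr
    have htl : (∑ h : C.x ⟶ C.x, C.Gam h
        (∑ z : G, C.θ.act (Groupoid.inv (C.τ z)) (cA * C.e (𝟙 z)))) ∈ C.θ.D (𝟙 C.x) :=
      C.sumMem _ _ _ (fun h _ => C.D_sub h (C.gamMem h _))
    have hx1 : a * C.e (𝟙 C.x) = b := by rw [ha]; exact C.comp_x hb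
    have hx2 : a * C.e (𝟙 C.x) = ∑ h : C.x ⟶ C.x, C.Gam h
        (∑ z : G, C.θ.act (Groupoid.inv (C.τ z)) (cA * C.e (𝟙 z))) := by
      rw [htr]; exact C.comp_x htl
    exact ⟨_, hcx, hx2.symm.trans hx1⟩
  · intro H a hainv
    have hainv' : ∀ {y w : G} (g : y ⟶ w), C.Gam g a = a * C.e g := fun g => hainv g
    set b := a * C.e (𝟙 C.x) with hbdef
    have hb : b ∈ C.θ.D (𝟙 C.x) := C.mulE_mem _ a
    have hbinv : ∀ h : C.x ⟶ C.x,
        C.θ.act h (b * C.e (Groupoid.inv h)) = b * C.e h := by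
      intro h
      have h1 : b * C.e (Groupoid.inv h) = a * C.e (Groupoid.inv h) := by
        rw [hbdef, C.mul_e_absorb (Groupoid.inv h) a]
      have h2 : b * C.e h = a * C.e h := by
        rw [hbdef, C.mul_e_absorb h a]
      rw [h1, h2]
      exact hainv' h
    obtain ⟨c, hc, hcb⟩ := H b hb hbinv
    refine ⟨c, ?_⟩
    have htr := C.trace_eq c
    have hcs : (∑ z : G, C.θ.act (Groupoid.inv (C.τ z)) (c * C.e (𝟙 z))) = c := by
      rw [Finset.sum_eq_single C.x
        (fun z _ hne => by
          rw [C.horth C.x z (Ne.symm hne) c hc _ (C.eMem _), C.actZero])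
        (fun h => absurd (Finset.mem_univ C.x) h)]
      rw [(C.memD _).1 hc, C.hτx, ginv_id]
      exact C.θ.act_id C.x c hc
    rw [hcs] at htr
    have hcb' : (∑ h : C.x ⟶ C.x, C.Gam h c) = b := hcb
    rw [hcb'] at htr
    have hfin : (∑ w : G, C.Gam (C.τ w) b) = a := by
      have h1 : ∀ w : G, C.Gam (C.τ w) b = a * C.e (𝟙 w) := by
        intro w
        have e1 : C.Gam (C.τ w) b = C.Gam (C.τ w) a := by
          show C.θ.act _ (b * C.e (Groupoid.inv (C.τ w))) =
            C.θ.act _ (a * C.e (Groupoid.inv (C.τ w)))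
          rw [hbdef, C.eTauInv w, mul_assoc, C.he_idem]
        rw [e1, hainv' (C.τ w), C.eTau w]
      rw [Finset.sum_congr rfl (fun w _ => h1 w)]
      exact C.sumComp a
    exact htr.trans hfin

end Ctx

end Aux

/-!
STATEMENT 14: Same setting.  The trace map t_θ : A → A^θ,
t_θ(a) = Σ_{g∈𝒢} θ_g(a·1_{g⁻¹}), is surjective onto
A^θ = {a : θ_g(a·1_{g⁻¹}) = a·1_g ∀ g} if and only if the trace map
t_{θ_{(x)}} : B_x → B_x^{θ_{(x)}} of the partial action of the isotropy group 𝒢(x)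
on B_x is surjective onto B_x^{θ_{(x)}}.
-/
theorem extension_partial_actions_stmt14
    {G : Type v} [Groupoid G] {A : Type u} [NonUnitalRing A]
    [Fintype G] [∀ y z : G, Fintype (y ⟶ z)]
    (hconn : ∀ a b : G, Nonempty (a ⟶ b))
    (x : G) (τ : ∀ y : G, x ⟶ y) (hτx : τ x = 𝟙 x)
    (θ : PartialAction G A)
    (e : ∀ {y z : G}, (y ⟶ z) → A)
    (he_idem : ∀ {y z : G} (g : y ⟶ z), e g * e g = e g)
    (he_cent : ∀ {y z : G} (g : y ⟶ z) (b : A), e g * b = b * e g)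
    (hDe : ∀ {y z : G} (g : y ⟶ z), θ.D g = {a : A | ∃ b : A, a = b * e g})
    (hgt1 : ∀ y : G, θ.D (Groupoid.inv (τ y)) = θ.D (𝟙 x))
    (hgt2 : ∀ y : G, θ.D (τ y) = θ.D (𝟙 y))
    (horth : ∀ y z : G, y ≠ z → ∀ a ∈ θ.D (𝟙 y), ∀ b ∈ θ.D (𝟙 z), a * b = 0)
    (hspan : ∀ a : A, ∃ f : G → A, (∀ y : G, f y ∈ θ.D (𝟙 y)) ∧ a = ∑ y : G, f y) :
    (∀ a : A, (∀ {y z : G} (g : y ⟶ z),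
        θ.act g (a * e (Groupoid.inv g)) = a * e g) →
      ∃ c : A, (∑ y : G, ∑ w : G, ∑ g : y ⟶ w,
          θ.act g (c * e (Groupoid.inv g))) = a)
    ↔
    (∀ b ∈ θ.D (𝟙 x), (∀ h : x ⟶ x,
        θ.act h (b * e (Groupoid.inv h)) = b * e h) →
      ∃ c ∈ θ.D (𝟙 x), (∑ h : x ⟶ x,
          θ.act h (c * e (Groupoid.inv h))) = b) :=
  Ctx.main
    { θ := θ, e := fun {y z} g => e g, x := x, τ := τ, hτx := hτx,
      he_idem := fun {y z} g => he_idem g,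
      he_cent := fun {y z} g => he_cent g,
      hDe := fun {y z} g => hDe g,
      hgt1 := hgt1, hgt2 := hgt2, horth := horth, hspan := hspan }
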